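/- arXiv:1703.06631 — 2 statements merged into one kernel-verified Lean document; each statement's English description precedes it below -/
import Mathlib

section
/- Let A be an additive commutative group, p ≥ 2 an integer, V' ⊆ A a nonempty subset, P ∈ V', and A' the subgroup of A generated by V' − P. Suppose there are integers j > k > 0 such that p^j • V' ⊆ p^k • V', and suppose that A' is (p^j − p^k)-divisible, i.e. for every a ∈ A' there exists b ∈ A' with (p^j − p^k) • b = a. Then there exists α ∈ A such that (p^j − p^k) • α = 0 and V' ⊆ α + A' (every v ∈ V' can be written as α + a with a ∈ A'). In particular, there exist an integer m > 0 and α ∈ A with m • α = 0 and V' ⊆ α + A'. (This is the group-theoretic core of Lemma 1 of the paper: a subset of an abelian variety whose image under multiplication by p^j equals its image under multiplication by p^k is contained in a torsion translate of the subgroup it spans.) -/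
/-!
Choose `Q ∈ V'` with `p^j • P = p^k • Q`. Then `(p^j - p^k) • P = p^k • (Q - P)` lies in `A'`;
dividing it inside `A'` gives `b ∈ A'` with `(p^j - p^k) • b = (p^j - p^k) • P`, so `α = P - b`
is `(p^j - p^k)`-torsion, and `V' ⊆ P + A' = α + A'`.
-/

theorem sub_zsmul_eq_zsmul_sub_of_zsmul_eq {A : Type*} [AddCommGroup A] {m n : ℤ} {x y : A}
    (h : m • x = n • y) : (m - n) • x = n • (y - x) := by
  rw [sub_smul, smul_sub, h]

theorem sub_mem_closure_image_sub {A : Type*} [AddCommGroup A] {V : Set A} {v : A} (hv : v ∈ V)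
    (P : A) : v - P ∈ AddSubgroup.closure ((fun s => s - P) '' V) :=
  AddSubgroup.subset_closure ⟨v, hv, rfl⟩

theorem AddSubgroup.exists_zsmul_eq_zero_sub_mem_of_zsmul_mem {A : Type*} [AddCommGroup A]
    {H : AddSubgroup A} {n : ℤ} (hdiv : ∀ a ∈ H, ∃ b ∈ H, n • b = a) {x : A} (hx : n • x ∈ H) :
    ∃ α : A, n • α = 0 ∧ x - α ∈ H := by
  obtain ⟨b, hb, hbx⟩ := hdiv _ hx
  exact ⟨x - b, by rw [smul_sub, hbx, sub_self], by rwa [sub_sub_cancel]⟩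

theorem subset_torsion_translate_of_pow_smul_subset_general
    {A : Type*} [AddCommGroup A] (p : ℤ) (hp : 2 ≤ p)
    (V' : Set A) {P : A} (hP : P ∈ V')
    (A' : AddSubgroup A)
    (hA' : A' = AddSubgroup.closure ((fun s => s - P) '' V'))
    (j k : ℕ) (hjk : k < j)
    (h : (fun v => p ^ j • v) '' V' ⊆ (fun v => p ^ k • v) '' V')
    (hdiv : ∀ a ∈ A', ∃ b ∈ A', (p ^ j - p ^ k) • b = a) :
    (∃ α : A, (p ^ j - p ^ k) • α = 0 ∧ ∀ v ∈ V', ∃ a ∈ A', v = α + a) ∧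
    (∃ m : ℤ, 0 < m ∧ ∃ α : A, m • α = 0 ∧ ∀ v ∈ V', ∃ a ∈ A', v = α + a) := by
  subst hA'
  have hpos : 0 < p ^ j - p ^ k := sub_pos.2 (pow_lt_pow_right₀ (by omega) hjk)
  obtain ⟨Q, hQ, hPQ⟩ := h ⟨P, hP, rfl⟩
  have hnP : (p ^ j - p ^ k) • P ∈ AddSubgroup.closure ((fun s => s - P) '' V') := by
    rw [sub_zsmul_eq_zsmul_sub_of_zsmul_eq hPQ.symm]
    exact zsmul_mem (sub_mem_closure_image_sub hQ P) _
  obtain ⟨α, hα, hPα⟩ := AddSubgroup.exists_zsmul_eq_zero_sub_mem_of_zsmul_mem hdiv hnP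
  have hV : ∀ v ∈ V', ∃ a ∈ AddSubgroup.closure ((fun s => s - P) '' V'), v = α + a :=
    fun v hv => ⟨(v - P) + (P - α), add_mem (sub_mem_closure_image_sub hv P) hPα, by abel⟩
  exact ⟨⟨α, hα, hV⟩, ⟨_, hpos, α, hα, hV⟩⟩

/-- Group-theoretic core of Lemma 1: if `p ≥ 2`, `V' ⊆ A` is nonempty, `P ∈ V'`,
`A'` is the subgroup generated by `V' - P`, `j > k > 0` are integers with
`p^j • V' ⊆ p^k • V'`, and `A'` is `(p^j - p^k)`-divisible, then there is an
`α ∈ A` with `(p^j - p^k) • α = 0` and `V' ⊆ α + A'`; in particular there are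
an integer `m > 0` and `α ∈ A` with `m • α = 0` and `V' ⊆ α + A'`. -/
theorem subset_torsion_translate_of_pow_smul_subset
    {A : Type*} [AddCommGroup A] (p : ℤ) (hp : 2 ≤ p)
    (V' : Set A) (hne : V'.Nonempty) {P : A} (hP : P ∈ V')
    (A' : AddSubgroup A)
    (hA' : A' = AddSubgroup.closure ((fun s => s - P) '' V'))
    (j k : ℕ) (hk : 0 < k) (hjk : k < j)
    (h : (fun v => p ^ j • v) '' V' ⊆ (fun v => p ^ k • v) '' V')
    (hdiv : ∀ a ∈ A', ∃ b ∈ A', (p ^ j - p ^ k) • b = a) :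
    (∃ α : A, (p ^ j - p ^ k) • α = 0 ∧ ∀ v ∈ V', ∃ a ∈ A', v = α + a) ∧
    (∃ m : ℤ, 0 < m ∧ ∃ α : A, m • α = 0 ∧ ∀ v ∈ V', ∃ a ∈ A', v = α + a) :=
  subset_torsion_translate_of_pow_smul_subset_general p hp V' hP A' hA' j k hjk h hdiv
end

section
/- Let A be a topological additive commutative group (addition and negation continuous), p ≥ 2 an integer, and let μ : A → A denote the map x ↦ p • x. Let V ⊆ A be a closed subset such that μ(V) ⊆ V. Assume: (i) μ is a closed map; (ii) V has only finitely many irreducible components and the topological Krull dimension of V is finite; (iii) for every irreducible component Z of V of maximal topological Krull dimension, the topological Krull dimension of μ(Z) equals that of Z. Let V' be an irreducible component of V of maximal topological Krull dimension, fix P ∈ V', and let A' be the topological closure of the subgroup of A generated by V' − P. Assume further that A' is n-divisible for every integer n > 0, i.e. for every n > 0 and every a ∈ A' there exists b ∈ A' with n • b = a. Then there exist an integer m > 0 and a point α ∈ A such that m • α = 0 and V' ⊆ α + A'. (This is a topological-group rendering of Lemma 1 of the paper, whose hypotheses (i)–(iii) and the divisibility of A' are the properties of multiplication by p and of abelian subvarieties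 of an abelian variety used in the paper's proof: multiplication by p on an abelian variety is a finite, hence closed and dimension-preserving, morphism, and abelian subvarieties are divisible groups.) -/
/-!
Multiplication by `p` maps a component `W` of maximal dimension onto one: `p • W` is closed,
irreducible and of the same (finite) dimension as the component containing it, so it fills that
component. As there are finitely many components, `p ^ k • V' = p ^ l • V'` for some `k < l`, so
`p ^ k • P = p ^ l • y` with `y ∈ V'`. Then `m = p ^ l - p ^ k` gives
`m • P = -(p ^ l • (y - P)) ∈ A'`; writing `m • P = m • b` with `b ∈ A'`, the point
`α = P - b` is `m`-torsion and `V' ⊆ P + A' = α + A'`.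
-/

/-- The irreducible components of the subspace `V` of `A`, viewed as subsets of
the ambient space: the maximal subsets of `V` that are irreducible and closed
in the subspace topology of `V`. -/
def irreducibleComponentsIn {A : Type*} [TopologicalSpace A] (V : Set A) :
    Set (Set A) :=
  {Z | Z ⊆ V ∧ IsIrreducible Z ∧ IsClosed ((Subtype.val ⁻¹' Z : Set V)) ∧
    ∀ Z' : Set A, Z' ⊆ V → IsIrreducible Z' →
      IsClosed ((Subtype.val ⁻¹' Z' : Set V)) → Z ⊆ Z' → Z' = Z}

open Set Topology TopologicalSpace

section Irreducible

variable {X Y : Type*} [TopologicalSpace X] [TopologicalSpace Y]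

lemma Topology.IsInducing.isPreirreducible_preimage {f : Y → X} (hf : IsInducing f) {t : Set X}
    (ht : IsPreirreducible t) (htf : t ⊆ range f) : IsPreirreducible (f ⁻¹' t) := by
  rintro u v hu hv ⟨x, hxt, hxu⟩ ⟨y, hyt, hyv⟩
  obtain ⟨U, hU, rfl⟩ := hf.isOpen_iff.mp hu
  obtain ⟨W, hW, rfl⟩ := hf.isOpen_iff.mp hv
  obtain ⟨z, hzt, hzU, hzW⟩ := ht U W hU hW ⟨f x, hxt, hxu⟩ ⟨f y, hyt, hyv⟩
  obtain ⟨w, rfl⟩ := htf hzt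
  exact ⟨w, hzt, hzU, hzW⟩

lemma Topology.IsInducing.isIrreducible_preimage {f : Y → X} (hf : IsInducing f) {t : Set X}
    (ht : IsIrreducible t) (htf : t ⊆ range f) : IsIrreducible (f ⁻¹' t) := by
  obtain ⟨x, hx⟩ := ht.nonempty
  obtain ⟨y, rfl⟩ := htf hx
  exact ⟨⟨y, hx⟩, hf.isPreirreducible_preimage ht.isPreirreducible htf⟩

lemma image_val_mem_irreducibleComponentsIn {V : Set X} {T : Set V}
    (hT : T ∈ irreducibleComponents V) : Subtype.val '' T ∈ irreducibleComponentsIn V := by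
  refine ⟨Subtype.coe_image_subset V T, hT.1.image _ continuous_subtype_val.continuousOn,
    by rw [preimage_image_eq _ Subtype.val_injective]
       exact isClosed_of_mem_irreducibleComponents T hT,
    fun Z hZV hZ _ hTZ => ?_⟩
  have hZT : Subtype.val ⁻¹' Z = T := (hT.eq_of_le
    (IsInducing.subtypeVal.isIrreducible_preimage hZ (by rwa [Subtype.range_coe]))
    (image_subset_iff.mp hTZ)).symm
  rw [← hZT, image_preimage_eq_of_subset (by rwa [Subtype.range_coe])]

lemma exists_mem_irreducibleComponentsIn_superset {V Z : Set X} (hZV : Z ⊆ V)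
    (hZ : IsIrreducible Z) : ∃ W ∈ irreducibleComponentsIn V, Z ⊆ W := by
  obtain ⟨T, hT, hZT⟩ := exists_mem_irreducibleComponents_subset_of_isIrreducible _
    (IsInducing.subtypeVal.isIrreducible_preimage hZ (by simpa using hZV))
  exact ⟨_, image_val_mem_irreducibleComponentsIn hT,
    fun x hx => ⟨⟨x, hZV hx⟩, hZT hx, rfl⟩⟩

lemma IsClosed.of_mem_irreducibleComponentsIn {V Z : Set X} (hV : IsClosed V)
    (hZ : Z ∈ irreducibleComponentsIn V) : IsClosed Z := by
  have := hV.isClosedEmbedding_subtypeVal.isClosedMap _ hZ.2.2.1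
  rwa [image_preimage_eq_of_subset (by rw [Subtype.range_coe]; exact hZ.1)] at this

end Irreducible

lemma Order.krullDim_add_one_le_of_strictMono {α β : Type*} [Preorder α] [Preorder β]
    {f : α → β} (hf : StrictMono f) {b : β} (hb : ∀ a, f a < b) :
    krullDim α + 1 ≤ krullDim β := by
  cases isEmpty_or_nonempty α
  · simp [krullDim_eq_bot]
  rw [krullDim_eq_iSup_height_of_nonempty]
  calc ((⨆ a, height a : ℕ∞) : WithBot ℕ∞) + 1 = ↑((⨆ a, height a) + 1) := rfl
    _ ≤ height b := by
      rw [ENat.iSup_add]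
      exact WithBot.coe_le_coe.mpr <| iSup_le fun a =>
        (add_le_add_left (height_le_height_apply_of_strictMono f hf a) 1).trans
          (height_add_one_le (hb a))
    _ ≤ krullDim β := height_le_krullDim b

section KrullDim

variable {X : Type*} [TopologicalSpace X]

lemma topologicalKrullDim_mono {Y Z : Set X} (h : Y ⊆ Z) :
    topologicalKrullDim Y ≤ topologicalKrullDim Z :=
  (IsEmbedding.inclusion h).isInducing.topologicalKrullDim_le

lemma IsIrreducible.topologicalKrullDim_add_one_le {Y Z : Set X} (hZ : IsIrreducible Z)
    (hY : IsClosed Y) (hYZ : Y ⊂ Z) : topologicalKrullDim Y + 1 ≤ topologicalKrullDim Z := by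
  have := Subtype.irreducibleSpace hZ
  obtain ⟨z, hzZ, hzY⟩ := exists_of_ssubset hYZ
  have hrange : IsClosed (range (inclusion hYZ.subset)) := by
    rw [range_inclusion]; exact hY.preimage continuous_subtype_val
  refine Order.krullDim_add_one_le_of_strictMono
    (IrreducibleCloseds.map_strictMono_of_isInducing (IsEmbedding.inclusion hYZ.subset).isInducing)
    (b := ⟨univ, IrreducibleSpace.isIrreducible_univ Z, isClosed_univ⟩) fun a => ?_
  refine lt_of_le_of_ne (SetLike.coe_subset_coe.mp (subset_univ _)) fun h => hzY ?_
  have hz : (⟨z, hzZ⟩ : Z) ∈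
      (IrreducibleCloseds.map _ (continuous_inclusion hYZ.subset) a : Set Z) := by
    rw [h]; trivial
  rw [IrreducibleCloseds.coe_map] at hz
  obtain ⟨y, hy⟩ := closure_minimal (image_subset_range _ _) hrange hz
  have hyz : (y : X) = z := congrArg Subtype.val hy
  exact hyz ▸ y.2

lemma IsIrreducible.eq_of_topologicalKrullDim_eq {Y Z : Set X} (hZ : IsIrreducible Z)
    (hY : IsClosed Y) (hYZ : Y ⊆ Z) (hZfin : topologicalKrullDim Z ≠ ⊤)
    (hdim : topologicalKrullDim Y = topologicalKrullDim Z) : Y = Z := by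
  by_contra hne
  have hlt := hZ.topologicalKrullDim_add_one_le hY (hYZ.ssubset_of_ne hne)
  obtain ⟨z, hz⟩ := hZ.nonempty
  have : Nonempty (IrreducibleCloseds Z) :=
    ⟨⟨closure {⟨z, hz⟩}, isIrreducible_singleton.closure, isClosed_closure⟩⟩
  obtain ⟨n, hn⟩ := WithBot.ne_bot_iff_exists.mp (Order.krullDim_ne_bot_iff.mpr this)
  change _ = topologicalKrullDim Z at hn
  rw [hdim, ← hn] at hlt
  rw [← hn] at hZfin
  lift n to ℕ using (by simpa using hZfin)
  norm_cast at hlt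
  omega

end KrullDim

section MaxDimComponents

variable {X : Type*} [TopologicalSpace X]

def maxDimComponentsIn (V : Set X) : Set (Set X) :=
  {Z ∈ irreducibleComponentsIn V |
    ∀ Z' ∈ irreducibleComponentsIn V, topologicalKrullDim Z' ≤ topologicalKrullDim Z}

variable {V : Set X} {f : X → X}

lemma image_mem_maxDimComponentsIn (hV : IsClosed V) (hdimV : topologicalKrullDim V ≠ ⊤)
    (hf : Continuous f) (hfc : IsClosedMap f) (hfV : f '' V ⊆ V) {W : Set X}
    (hW : W ∈ maxDimComponentsIn V) (hfW : topologicalKrullDim (f '' W) = topologicalKrullDim W) :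
    f '' W ∈ maxDimComponentsIn V := by
  obtain ⟨hWcomp, hWmax⟩ := hW
  obtain ⟨Z, hZ, hfWZ⟩ := exists_mem_irreducibleComponentsIn_superset
    ((image_mono hWcomp.1).trans hfV) (hWcomp.2.1.image f hf.continuousOn)
  have hZW : topologicalKrullDim Z = topologicalKrullDim W :=
    le_antisymm (hWmax Z hZ) (hfW ▸ topologicalKrullDim_mono hfWZ)
  have hfWeq : f '' W = Z := hZ.2.1.eq_of_topologicalKrullDim_eq
    (hfc W (hV.of_mem_irreducibleComponentsIn hWcomp)) hfWZ
    (ne_top_of_le_ne_top hdimV (topologicalKrullDim_mono hZ.1)) (hfW.trans hZW.symm)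
  exact hfWeq ▸ ⟨hZ, hZW ▸ hWmax⟩

lemma exists_lt_image_iterate_eq (hV : IsClosed V) (hdimV : topologicalKrullDim V ≠ ⊤)
    (hf : Continuous f) (hfc : IsClosedMap f) (hfV : f '' V ⊆ V)
    (hfin : (irreducibleComponentsIn V).Finite)
    (hfdim : ∀ W ∈ maxDimComponentsIn V,
      topologicalKrullDim (f '' W) = topologicalKrullDim W)
    {W : Set X} (hW : W ∈ maxDimComponentsIn V) :
    ∃ k l, k < l ∧ f^[k] '' W = f^[l] '' W := by
  have hmem : ∀ n, f^[n] '' W ∈ maxDimComponentsIn V := by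
    intro n
    induction n with
    | zero => simpa using hW
    | succ n ih =>
      rw [Function.iterate_succ', image_comp]
      exact image_mem_maxDimComponentsIn hV hdimV hf hfc hfV ih (hfdim _ ih)
  exact (hfin.subset fun _ h => h.1).exists_lt_map_eq_of_forall_mem hmem

end MaxDimComponents

/-- Topological-group rendering of Lemma 1 of the paper. -/
theorem component_subset_torsion_translate
    {A : Type*} [AddCommGroup A] [TopologicalSpace A] [IsTopologicalAddGroup A]
    (p : ℤ) (hp : 2 ≤ p)
    (V : Set A) (hVclosed : IsClosed V)
    (hμV : (fun x : A => p • x) '' V ⊆ V)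
    (hμclosed : IsClosedMap (fun x : A => p • x))
    (hfin : (irreducibleComponentsIn V).Finite)
    (hdimV : topologicalKrullDim V ≠ ⊤)
    (hμdim : ∀ Z ∈ irreducibleComponentsIn V,
      (∀ Z' ∈ irreducibleComponentsIn V,
        topologicalKrullDim Z' ≤ topologicalKrullDim Z) →
      topologicalKrullDim ((fun x : A => p • x) '' Z) = topologicalKrullDim Z)
    (V' : Set A) (hV' : V' ∈ irreducibleComponentsIn V)
    (hV'max : ∀ Z ∈ irreducibleComponentsIn V,
      topologicalKrullDim Z ≤ topologicalKrullDim V')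
    (P : A) (hP : P ∈ V')
    (A' : Set A)
    (hA' : A' = closure ((AddSubgroup.closure ((fun s => s - P) '' V') : Set A)))
    (hdiv : ∀ n : ℤ, 0 < n → ∀ a ∈ A', ∃ b ∈ A', n • b = a) :
    ∃ m : ℤ, 0 < m ∧ ∃ α : A, m • α = 0 ∧ ∀ v ∈ V', ∃ a ∈ A', v = α + a := by
  obtain ⟨k, l, hkl, hV'kl⟩ := exists_lt_image_iterate_eq hVclosed hdimV (continuous_zsmul p)
    hμclosed hμV hfin (fun W hW => hμdim W hW.1 hW.2) ⟨hV', hV'max⟩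
  rw [smul_iterate, smul_iterate] at hV'kl
  obtain ⟨y, hy, hyP : p ^ l • y = p ^ k • P⟩ : p ^ k • P ∈ (p ^ l • ·) '' V' :=
    hV'kl ▸ mem_image_of_mem _ hP
  subst hA'
  set H := (AddSubgroup.closure ((fun s => s - P) '' V')).topologicalClosure
  rw [← AddSubgroup.topologicalClosure_coe] at hdiv ⊢
  have hsub : ∀ v ∈ V', v - P ∈ H := fun v hv =>
    AddSubgroup.le_topologicalClosure _ (AddSubgroup.subset_closure ⟨v, hv, rfl⟩)
  have hm : 0 < p ^ l - p ^ k := sub_pos.mpr (pow_lt_pow_right₀ (by omega) hkl)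
  have hmP : (p ^ l - p ^ k) • P ∈ H := by
    have hmP_eq : (p ^ l - p ^ k) • P = -(p ^ l • (y - P)) := by
      rw [sub_zsmul, zsmul_sub, hyP]; abel
    exact hmP_eq ▸ H.neg_mem (H.zsmul_mem (hsub y hy) _)
  obtain ⟨b, hb, hbP⟩ := hdiv _ hm _ hmP
  exact ⟨_, hm, P - b, by rw [zsmul_sub, hbP, sub_self],
    fun v hv => ⟨b + (v - P), H.add_mem hb (hsub v hv), by abel⟩⟩
end
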